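/- Every continuously differentiable contractive game is delta-antipassive: if F: X -> R^n is C^1 and satisfies (y-x)'(F(y)-F(x)) <= 0 for all x, y in X, then for every Lipschitz trajectory x in X and all T > 0, int_0^T x_dot(t)' DF(x(t)) x_dot(t) dt <= 0, hence inf_{T>0} ( - int_0^T (d/dt F(x(t)))' x_dot(t) dt ) >= 0 > -infinity. -/

import Mathlib

open scoped BigOperators

/-- The probability simplex in `ℝ^n`. -/
def simplex (n : ℕ) : Set (Fin n → ℝ) := stdSimplex ℝ (Fin n)

/-- Dot product `p'x`. -/
def dot {n : ℕ} (p x : Fin n → ℝ) : ℝ := ∑ i, p i * x i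

lemma dot_comm {n : ℕ} (p q : Fin n → ℝ) : dot p q = dot q p := by
  simp [dot, mul_comm]

lemma dot_smul_smul {n : ℕ} (c : ℝ) (p q : Fin n → ℝ) :
    dot (c • p) (c • q) = c ^ 2 * dot p q := by
  simp only [dot, Pi.smul_apply, smul_eq_mul, Finset.mul_sum]
  exact Finset.sum_congr rfl fun i _ => by ring

lemma dot_continuous {n : ℕ} :
    Continuous fun pq : (Fin n → ℝ) × (Fin n → ℝ) => dot pq.1 pq.2 := by
  unfold dot
  exact continuous_finset_sum _ fun i _ =>
    ((continuous_apply i).comp continuous_fst).mul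
      ((continuous_apply i).comp continuous_snd)

set_option maxHeartbeats 1000000 in
lemma key_quadform {n : ℕ}
    (F : (Fin n → ℝ) → (Fin n → ℝ)) (hF : ContDiff ℝ 1 F)
    (hcontr : ∀ x ∈ simplex n, ∀ y ∈ simplex n, dot (y - x) (F y - F x) ≤ 0)
    (x : ℝ → Fin n → ℝ) (hxX : ∀ t, x t ∈ simplex n)
    (t : ℝ) (z : Fin n → ℝ) (hz : HasDerivAt x z t) :
    dot (fderiv ℝ F (x t) z) z ≤ 0 := by
  set L := fderiv ℝ F (x t) with hL
  have hdF : HasFDerivAt F L (x t) := (hF.differentiable one_ne_zero (x t)).hasFDerivAt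
  have hu : HasDerivAt (fun s => F (x s)) (L z) t := hdF.comp_hasDerivAt t hz
  rw [hasDerivAt_iff_tendsto_slope] at hz hu
  have htend : Filter.Tendsto
      (fun s => dot (slope x t s) (slope (fun s => F (x s)) t s))
      (nhdsWithin t {t}ᶜ) (nhds (dot z (L z))) :=
    (dot_continuous.tendsto (z, L z)).comp (hz.prodMk_nhds hu)
  have hle : ∀ᶠ s in nhdsWithin t {t}ᶜ,
      dot (slope x t s) (slope (fun s => F (x s)) t s) ≤ 0 := by
    filter_upwards [self_mem_nhdsWithin] with s _
    have h1 : slope x t s = (s - t)⁻¹ • (x s - x t) := by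
      simp [slope, vsub_eq_sub]
    have h2 : slope (fun s => F (x s)) t s = (s - t)⁻¹ • (F (x s) - F (x t)) := by
      simp [slope, vsub_eq_sub]
    rw [h1, h2, dot_smul_smul]
    exact mul_nonpos_of_nonneg_of_nonpos (sq_nonneg _)
      (hcontr (x t) (hxX t) (x s) (hxX s))
  have : dot z (L z) ≤ 0 := le_of_tendsto htend hle
  rwa [dot_comm]

theorem stmt_12 {n : ℕ}
    (F : (Fin n → ℝ) → (Fin n → ℝ)) (hF : ContDiff ℝ 1 F)
    (hcontr : ∀ x ∈ simplex n, ∀ y ∈ simplex n, dot (y - x) (F y - F x) ≤ 0)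
    (x : ℝ → Fin n → ℝ) (K : NNReal) (hLip : LipschitzWith K x)
    (hxX : ∀ t, x t ∈ simplex n)
    (x' u' : ℝ → Fin n → ℝ)
    (hx' : ∀ᵐ t, HasDerivAt x (x' t) t)
    (hu' : ∀ᵐ t, HasDerivAt (fun τ => F (x τ)) (u' t) t) :
    (∀ T > (0 : ℝ), ∫ t in (0 : ℝ)..T, dot (fderiv ℝ F (x t) (x' t)) (x' t) ≤ 0) ∧
      ∀ T > (0 : ℝ), 0 ≤ ∫ t in (0 : ℝ)..T, -dot (u' t) (x' t) := by
  have h1 : ∀ᵐ t, dot (fderiv ℝ F (x t) (x' t)) (x' t) ≤ 0 := by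
    filter_upwards [hx'] with t ht
    exact key_quadform F hF hcontr x hxX t (x' t) ht
  have h2 : ∀ᵐ t, u' t = fderiv ℝ F (x t) (x' t) := by
    filter_upwards [hx', hu'] with t ht htu
    exact htu.unique (((hF.differentiable one_ne_zero (x t)).hasFDerivAt).comp_hasDerivAt t ht)
  constructor
  · intro T hT
    rw [intervalIntegral.integral_of_le hT.le]
    apply MeasureTheory.integral_nonpos_of_ae
    exact MeasureTheory.ae_restrict_of_ae h1
  · intro T hT
    rw [intervalIntegral.integral_of_le hT.le]
    apply MeasureTheory.integral_nonneg_of_ae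
    refine MeasureTheory.ae_restrict_of_ae ?_
    filter_upwards [h1, h2] with t ht1 ht2
    rw [ht2]
    simpa using neg_nonneg.mpr ht1
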